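/- arXiv:1304.5951 — 7 statements merged into one kernel-verified Lean document; each statement's English description precedes it below -/
import Mathlib

section
/- If the family {E_x : x ∈ X} of fibers of a relation E ⊆ X × Y has VC dimension at most d, then the dual family {E^y : y ∈ Y} has VC dimension strictly less than 2^(d+1). -/
open Finset

/-- If the family of fibers `{E_x : x ∈ X}` has VC dimension at most `d`
(no set of size `> d` is shattered), then the dual family `{E^y : y ∈ Y}`
has VC dimension strictly less than `2^(d+1)`. -/
theorem dual_vc_lt_two_pow {X Y : Type*} [Fintype X] [Fintype Y]
    [DecidableEq X] [DecidableEq Y] (E : X → Y → Bool) (d : ℕ)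
    (h : ∀ I : Finset Y, (∀ J ⊆ I, ∃ x : X, I.filter (fun y => E x y) = J) → I.card ≤ d) :
    ∀ I : Finset X, (∀ J ⊆ I, ∃ y : Y, I.filter (fun x => E x y) = J) → I.card < 2 ^ (d + 1) := by
  intro I hI
  by_contra hcard
  push_neg at hcard
  have hemb : Nonempty ((Fin (d+1) → Bool) ↪ {x // x ∈ I}) := by
    rw [Function.Embedding.nonempty_iff_card_le]
    simpa using hcard
  obtain ⟨e⟩ := hemb
  have hy : ∀ i : Fin (d+1), ∃ y : Y,
      I.filter (fun x => E x y) =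
        (Finset.univ.filter (fun s : Fin (d+1) → Bool => s i)).image (fun s => (e s : X)) := by
    intro i
    apply hI
    intro x hx
    simp only [mem_image] at hx
    obtain ⟨s, _, rfl⟩ := hx
    exact (e s).2
  choose y hyspec using hy
  have key : ∀ (s : Fin (d+1) → Bool) (i), E (e s : X) (y i) = s i := by
    intro s i
    have h1 : (e s : X) ∈ I.filter (fun x => E x (y i)) ↔ s i = true := by
      rw [hyspec i]
      simp only [mem_image, mem_filter, mem_univ, true_and]
      constructor
      · rintro ⟨t, ht, hts⟩
        have : t = s := e.injective (Subtype.ext hts)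
        subst this; exact ht
      · intro hs; exact ⟨s, hs, rfl⟩
    rw [mem_filter] at h1
    have h2 : E (e s : X) (y i) = true ↔ s i = true := by
      constructor
      · intro hE; exact h1.mp ⟨(e s).2, hE⟩
      · intro hs; exact (h1.mpr hs).2
    cases hb : s i with
    | true => exact h2.mpr hb
    | false =>
      cases hE : E (e s : X) (y i) with
      | false => rfl
      | true => rw [h2.mp hE] at hb; exact Bool.noConfusion hb
  have yinj : Function.Injective y := by
    intro i j hij
    by_contra hne
    set s : Fin (d+1) → Bool := fun k => decide (k = i) with hs
    have h1 : E (e s : X) (y i) = true := by rw [key s i]; simp [hs]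
    have h2 : E (e s : X) (y j) = (false : Bool) := by
      rw [key s j]; simp [hs]; exact fun hji => hne (hji ▸ rfl)
    rw [← hij, h1] at h2
    exact Bool.noConfusion h2
  have hJcard : (Finset.univ.image y).card = d + 1 := by
    rw [Finset.card_image_of_injective _ yinj, Finset.card_univ, Fintype.card_fin]
  have hshat : ∀ S ⊆ Finset.univ.image y, ∃ x : X,
      (Finset.univ.image y).filter (fun z => E x z) = S := by
    intro S hS
    refine ⟨(e (fun i => decide (y i ∈ S)) : X), ?_⟩
    ext z
    simp only [mem_filter, mem_image, mem_univ, true_and]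
    constructor
    · rintro ⟨⟨i, rfl⟩, hE⟩
      rw [key] at hE
      exact of_decide_eq_true hE
    · intro hzS
      obtain ⟨i, rfl⟩ := by simpa using hS hzS
      refine ⟨⟨i, rfl⟩, ?_⟩
      rw [key]
      exact decide_eq_true hzS
  have := h _ hshat
  rw [hJcard] at this
  omega
end

section
/- (Sauer–Shelah) If the family {E_x : x ∈ X} has VC dimension at most d, then for any finite set I ⊆ Y with |I| ≥ d, the number of distinct traces |{E_x ∩ I : x ∈ X}| is at most (e·|I|/d)^d. -/
open Finset

lemma sum_choose_le_exp (n d : ℕ) (hd : 1 ≤ d) (hdn : d ≤ n) :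
    ((∑ k ∈ Iic d, n.choose k : ℕ) : ℝ) ≤ (Real.exp 1 * n / d) ^ d := by
  have hn : 0 < n := lt_of_lt_of_le hd hdn
  have hnR : (0:ℝ) < n := by exact_mod_cast hn
  have hdR : (0:ℝ) < d := by exact_mod_cast hd
  set x : ℝ := (d : ℝ) / n with hx
  have hx0 : 0 < x := div_pos hdR hnR
  have hx1 : x ≤ 1 := by
    rw [hx, div_le_one hnR]; exact_mod_cast hdn
  have key : ((∑ k ∈ Iic d, n.choose k : ℕ) : ℝ) ≤ (1 + x) ^ n / x ^ d := by
    push_cast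
    have h1 : ∀ k ∈ Iic d, (n.choose k : ℝ) ≤ (n.choose k : ℝ) * x ^ k / x ^ d := by
      intro k hk
      rw [mem_Iic] at hk
      have hxk : x ^ d ≤ x ^ k := pow_le_pow_of_le_one hx0.le hx1 hk
      rw [le_div_iff₀ (by positivity)]
      gcongr
    calc (∑ k ∈ Iic d, (n.choose k : ℝ))
        ≤ ∑ k ∈ Iic d, (n.choose k : ℝ) * x ^ k / x ^ d := Finset.sum_le_sum h1
      _ = (∑ k ∈ Iic d, (n.choose k : ℝ) * x ^ k) / x ^ d := by
          rw [Finset.sum_div]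
      _ ≤ (∑ k ∈ Finset.range (n + 1), (n.choose k : ℝ) * x ^ k) / x ^ d := by
          gcongr
          exact fun k hk => Finset.mem_range.2 (Nat.lt_succ_of_le ((mem_Iic.1 hk).trans hdn))
      _ = (1 + x) ^ n / x ^ d := by
          rw [add_comm 1 x, add_pow]
          simp [mul_comm]
  refine key.trans ?_
  have h2 : (1 + x) ^ n ≤ Real.exp 1 ^ d := by
    calc (1 + x) ^ n ≤ (Real.exp x) ^ n :=
          pow_le_pow_left₀ (by positivity) (by rw [add_comm]; exact Real.add_one_le_exp x) n
      _ = Real.exp (n * x) := (Real.exp_nat_mul x n).symm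
      _ = Real.exp d := by
          rw [hx, mul_div_cancel₀ _ hnR.ne']
      _ = Real.exp 1 ^ d := by
          rw [← Real.exp_nat_mul, mul_one]
  calc (1 + x) ^ n / x ^ d ≤ Real.exp 1 ^ d / x ^ d := by gcongr
    _ = (Real.exp 1 * n / d) ^ d := by
        rw [← div_pow, hx, div_div_eq_mul_div]

/-- Sauer–Shelah, exponential form: if `{E_x : x ∈ X}` has VC dimension at most `d ≥ 1`,
then for any `I ⊆ Y` with `|I| ≥ d`, the number of traces `|{E_x ∩ I : x ∈ X}|` is at
most `(e |I| / d)^d`. -/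
theorem sauer_shelah_exp {X Y : Type*} [Fintype X] [Fintype Y] [DecidableEq Y]
    (E : X → Y → Bool) (d : ℕ) (hd : 1 ≤ d)
    (h : ∀ I : Finset Y, (∀ J ⊆ I, ∃ x : X, I.filter (fun y => E x y) = J) → I.card ≤ d)
    (I : Finset Y) (hI : d ≤ I.card) :
    (((univ : Finset X).image (fun x => I.filter (fun y => E x y))).card : ℝ) ≤
      (Real.exp 1 * I.card / d) ^ d := by
  set 𝒜 : Finset (Finset Y) := (univ : Finset X).image (fun x => I.filter (fun y => E x y))
    with h𝒜
  have hsub : 𝒜.shatterer ⊆ (Iic d).biUnion (fun k => I.powersetCard k) := by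
    intro s hs
    rw [mem_shatterer] at hs
    -- s ⊆ I
    obtain ⟨u, hu, hsu⟩ := hs (Finset.Subset.refl s)
    have hsI : s ⊆ I := by
      have : s ⊆ u := Finset.inter_eq_left.1 hsu
      refine this.trans ?_
      simp only [h𝒜, mem_image] at hu
      obtain ⟨x, _, rfl⟩ := hu
      exact Finset.filter_subset _ _
    have hcard : s.card ≤ d := by
      apply h
      intro J hJ
      obtain ⟨u, hu, hsu⟩ := hs hJ
      simp only [h𝒜, mem_image] at hu
      obtain ⟨x, _, rfl⟩ := hu
      refine ⟨x, ?_⟩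
      rw [← hsu]
      ext y
      simp only [Finset.mem_filter, Finset.mem_inter]
      constructor
      · rintro ⟨hy, he⟩; exact ⟨hy, hsI hy, he⟩
      · rintro ⟨hy, _, he⟩; exact ⟨hy, he⟩
    exact mem_biUnion.2 ⟨s.card, mem_Iic.2 hcard, Finset.mem_powersetCard.2 ⟨hsI, rfl⟩⟩
  have hcard : 𝒜.card ≤ ∑ k ∈ Iic d, (I.card).choose k := by
    calc 𝒜.card ≤ 𝒜.shatterer.card := Finset.card_le_card_shatterer 𝒜
      _ ≤ ((Iic d).biUnion (fun k => I.powersetCard k)).card := Finset.card_le_card hsub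
      _ ≤ ∑ k ∈ Iic d, (I.powersetCard k).card := Finset.card_biUnion_le
      _ = ∑ k ∈ Iic d, (I.card).choose k := by simp [Finset.card_powersetCard]
  calc (𝒜.card : ℝ) ≤ ((∑ k ∈ Iic d, (I.card).choose k : ℕ) : ℝ) := by exact_mod_cast hcard
    _ ≤ (Real.exp 1 * I.card / d) ^ d := sum_choose_le_exp I.card d hd hI
end

section
/- (Sauer–Shelah, polynomial form) If the family {E_x : x ∈ X} has VC dimension at most d, then for any finite I ⊆ Y, the number of distinct traces |{E_x ∩ I : x ∈ X}| is at most the sum of binomial coefficients C(|I|, 0) + C(|I|, 1) + ... + C(|I|, d). -/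
open Finset

/-- Sauer–Shelah, polynomial form: if `{E_x : x ∈ X}` has VC dimension at most `d`,
then for any `I ⊆ Y` the number of traces is at most `∑_{k ≤ d} C(|I|, k)`. -/
theorem sauer_shelah_poly {X Y : Type*} [Fintype X] [Fintype Y] [DecidableEq Y]
    (E : X → Y → Bool) (d : ℕ)
    (h : ∀ I : Finset Y, (∀ J ⊆ I, ∃ x : X, I.filter (fun y => E x y) = J) → I.card ≤ d)
    (I : Finset Y) :
    ((univ : Finset X).image (fun x => I.filter (fun y => E x y))).card ≤
      ∑ k ∈ Finset.range (d + 1), I.card.choose k := by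
  set 𝒜 : Finset (Finset Y) := (univ : Finset X).image (fun x => I.filter (fun y => E x y))
  have h1 : 𝒜.card ≤ 𝒜.shatterer.card := Finset.card_le_card_shatterer 𝒜
  refine h1.trans ?_
  have hsub : 𝒜.shatterer ⊆ (Finset.range (d + 1)).biUnion (fun k => I.powersetCard k) := by
    intro s hs
    rw [mem_shatterer] at hs
    have hsI : s ⊆ I := by
      obtain ⟨u, hu, hsu⟩ := hs (Subset.refl s)
      have : s ⊆ u := fun y hy => mem_of_mem_inter_right (α := Y) (hsu.symm ▸ hy)
      simp only [𝒜, mem_image] at hu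
      obtain ⟨x, -, rfl⟩ := hu
      exact this.trans (filter_subset _ _)
    have hcard : s.card ≤ d := by
      apply h
      intro J hJ
      obtain ⟨u, hu, hsu⟩ := hs hJ
      simp only [𝒜, mem_image] at hu
      obtain ⟨x, -, rfl⟩ := hu
      refine ⟨x, ?_⟩
      rw [← hsu]
      ext y
      simp only [mem_filter, mem_inter]
      exact ⟨fun ⟨hy, he⟩ => ⟨hy, hsI hy, he⟩, fun ⟨hy, _, he⟩ => ⟨hy, he⟩⟩
    rw [mem_biUnion]
    exact ⟨s.card, mem_range.2 (Nat.lt_succ_of_le hcard), mem_powersetCard.2 ⟨hsI, rfl⟩⟩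
  refine (card_le_card hsub).trans ?_
  refine card_biUnion_le.trans ?_
  exact Finset.sum_le_sum fun k _ => le_of_eq (card_powersetCard k I)
end

section
/- Suppose (X₀, Y₀) is not 1/r-regular for E, with witnesses X' ⊆ X₀, Y' ⊆ Y₀ such that μ₀(X') ≥ 1/r, μ⁰(Y') ≥ 1/r and d(X',Y') ≥ d(X₀,Y₀) + 1/r. Let X̃' = {x ∈ X₀ : μ⁰(E_x ∩ Y')/μ⁰(Y') ≥ d(X₀,Y₀) + 1/(2r)}. Then μ₀(X̃') ≥ 1/(2r²). -/
open Finset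

/-- Edge density of `E` between `A` and `B`. -/
noncomputable def dens {X Y : Type*} [Fintype X] [Fintype Y] (E : X → Y → Bool)
    (A : Finset X) (B : Finset Y) : ℝ :=
  (((A ×ˢ B).filter (fun p => E p.1 p.2)).card : ℝ) / ((A.card : ℝ) * (B.card : ℝ))

open scoped Classical in
/-- If `X' ⊆ X₀`, `Y' ⊆ Y₀` witness the failure of `1/r`-regularity with
`d(X', Y') ≥ d(X₀, Y₀) + 1/r`, then the set `X̃'` of `x ∈ X₀` whose neighborhood meets `Y'`
in relative density at least `d(X₀, Y₀) + 1/(2r)` has measure at least `1/(2r²)`. -/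
theorem witness_set_large {X₀ Y₀ : Type*} [Fintype X₀] [Fintype Y₀] [Nonempty X₀] [Nonempty Y₀]
    (E : X₀ → Y₀ → Bool) (r : ℝ) (hr : 2 ≤ r) (X' : Finset X₀) (Y' : Finset Y₀)
    (hX' : 1 / r ≤ (X'.card : ℝ) / Fintype.card X₀)
    (hY' : 1 / r ≤ (Y'.card : ℝ) / Fintype.card Y₀)
    (hdens : dens E (univ : Finset X₀) (univ : Finset Y₀) + 1 / r ≤ dens E X' Y') :
    1 / (2 * r ^ 2) ≤
      ((((univ : Finset X₀).filter (fun x =>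
          dens E (univ : Finset X₀) (univ : Finset Y₀) + 1 / (2 * r) ≤
            ((Y'.filter (fun y => E x y)).card : ℝ) / Y'.card)).card : ℝ)) /
        Fintype.card X₀ := by
  set d0 := dens E (univ : Finset X₀) (univ : Finset Y₀) with hd0
  have hr0 : (0:ℝ) < r := lt_of_lt_of_le two_pos hr
  have hN : (0:ℝ) < Fintype.card X₀ := by
    exact_mod_cast Fintype.card_pos
  have hM : (0:ℝ) < Fintype.card Y₀ := by
    exact_mod_cast Fintype.card_pos
  have hX'c : (Fintype.card X₀ : ℝ) ≤ X'.card * r := by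
    rw [div_le_div_iff₀ hr0 hN] at hX'
    linarith
  have hX'pos : (0:ℝ) < X'.card := by nlinarith
  have hY'c : (Fintype.card Y₀ : ℝ) ≤ Y'.card * r := by
    rw [div_le_div_iff₀ hr0 hM] at hY'
    linarith
  have hY'pos : (0:ℝ) < Y'.card := by nlinarith
  have hd0nn : 0 ≤ d0 := by
    rw [hd0]
    unfold _root_.dens
    positivity
  set P : X₀ → Prop := fun x =>
      d0 + 1 / (2 * r) ≤ ((Y'.filter (fun y => E x y)).card : ℝ) / Y'.card with hP
  set S := (univ : Finset X₀).filter P with hS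
  -- sum identity
  have hsumN : ((X' ×ˢ Y').filter (fun p => E p.1 p.2)).card
      = ∑ x ∈ X', (Y'.filter (fun y => E x y)).card := by
    rw [card_filter, sum_product]
    exact sum_congr rfl fun x _ => (card_filter _ _).symm
  have hdXY : dens E X' Y' = (∑ x ∈ X', ((Y'.filter (fun y => E x y)).card : ℝ))
      / (X'.card * Y'.card) := by
    unfold _root_.dens
    rw [hsumN]
    push_cast
    ring
  -- split sum
  have hsplit : (∑ x ∈ X', ((Y'.filter (fun y => E x y)).card : ℝ))
      ≤ S.card * Y'.card + X'.card * ((d0 + 1 / (2 * r)) * Y'.card) := by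
    rw [← sum_filter_add_sum_filter_not X' P]
    have h1 : (∑ x ∈ X'.filter P, ((Y'.filter (fun y => E x y)).card : ℝ))
        ≤ S.card * Y'.card := by
      calc (∑ x ∈ X'.filter P, ((Y'.filter (fun y => E x y)).card : ℝ))
          ≤ ∑ x ∈ X'.filter P, (Y'.card : ℝ) := by
            refine sum_le_sum fun x _ => ?_
            exact_mod_cast card_filter_le _ _
        _ = (X'.filter P).card * Y'.card := by rw [sum_const, nsmul_eq_mul]
        _ ≤ S.card * Y'.card := by
            have : (X'.filter P).card ≤ S.card := by
              apply card_le_card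
              exact filter_subset_filter _ (subset_univ X')
            have := (Nat.cast_le (α := ℝ)).2 this
            nlinarith
    have h2 : (∑ x ∈ X'.filter (fun x => ¬ P x), ((Y'.filter (fun y => E x y)).card : ℝ))
        ≤ X'.card * ((d0 + 1 / (2 * r)) * Y'.card) := by
      calc (∑ x ∈ X'.filter (fun x => ¬ P x), ((Y'.filter (fun y => E x y)).card : ℝ))
          ≤ ∑ _x ∈ X'.filter (fun x => ¬ P x), (d0 + 1 / (2 * r)) * Y'.card := by
            refine sum_le_sum fun x hx => ?_
            have hx' := (mem_filter.1 hx).2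
            rw [hP] at hx'
            have h := le_of_not_ge hx'
            rw [div_le_iff₀ hY'pos] at h
            linarith
        _ = (X'.filter (fun x => ¬ P x)).card * ((d0 + 1 / (2 * r)) * Y'.card) := by
            rw [sum_const, nsmul_eq_mul]
        _ ≤ X'.card * ((d0 + 1 / (2 * r)) * Y'.card) := by
            have : ((X'.filter (fun x => ¬ P x)).card : ℝ) ≤ X'.card := by
              exact_mod_cast card_le_card (filter_subset _ _)
            have hfac : 0 ≤ (d0 + 1 / (2 * r)) * Y'.card := by positivity
            nlinarith
    linarith
  -- lower bound on the sum from hdens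
  have hlow : (d0 + 1 / r) * (X'.card * Y'.card)
      ≤ ∑ x ∈ X', ((Y'.filter (fun y => E x y)).card : ℝ) := by
    have := mul_le_mul_of_nonneg_right hdens (le_of_lt (by positivity :
      (0:ℝ) < (X'.card : ℝ) * Y'.card))
    rw [hdXY, div_mul_cancel₀] at this
    · exact this
    · positivity
  -- cancel Y'.card
  have hkey : (1 / (2 * r)) * (X'.card : ℝ) ≤ S.card := by
    have h := hlow.trans hsplit
    have : (1 / (2 * r)) * (X'.card : ℝ) * Y'.card ≤ S.card * Y'.card := by
      have e : (d0 + 1 / r) * (X'.card * Y'.card)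
          = X'.card * ((d0 + 1 / (2*r)) * Y'.card) + (1/(2*r)) * X'.card * Y'.card := by
        field_simp
        ring
      rw [e] at h
      linarith
    exact le_of_mul_le_mul_right this hY'pos
  -- conclude
  rw [le_div_iff₀ hN]
  have h2r : (X'.card : ℝ) ≤ 2 * r * S.card := by
    have h := mul_le_mul_of_nonneg_left hkey (le_of_lt (by positivity : (0:ℝ) < 2 * r))
    rwa [show (2*r) * ((1/(2*r)) * (X'.card:ℝ)) = (X'.card:ℝ) by field_simp] at h
  have hNS : (Fintype.card X₀ : ℝ) ≤ 2 * r ^ 2 * S.card := by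
    have h := mul_le_mul_of_nonneg_right h2r hr0.le
    calc (Fintype.card X₀ : ℝ) ≤ X'.card * r := hX'c
      _ ≤ 2 * r * S.card * r := h
      _ = 2 * r ^ 2 * S.card := by ring
  rw [div_mul_eq_mul_div, one_mul, div_le_iff₀ (by positivity : (0:ℝ) < 2 * r ^ 2)]
  linarith
end

section
/- Let X₀, Y₀ be nonempty finite sets, E ⊆ X₀ × Y₀, and suppose X̃ ⊆ X₀, Ỹ ⊆ Y₀ satisfy μ₀(X̃)·μ⁰(Ỹ) ≥ 1/(10r⁴) and d(X̃,Ỹ) ≥ d(X₀,Y₀) + 1/(10r), where r ≥ 1. Then for the partition pair P* = ({X̃, X₀\X̃}, {Ỹ, Y₀\Ỹ}), the energy satisfies ρ(P*) ≥ d(X₀,Y₀)² + 1/(1000·r⁶). -/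
/-!
Weight each cell of the partition pair by its mass `μ₀(A) μ⁰(B)`. These weights sum to `1` and the
weighted mean of the cell densities is `d(X₀, Y₀)`, so the energy minus `d(X₀, Y₀)²` is the
weighted variance of the cell densities. The cell `X̃ × Ỹ` alone contributes at least
`1/(10 r⁴) · (1/(10 r))²` to it.
-/

open Finset

theorem sq_add_mul_sq_sub_le_sum_mul_sq {ι : Type*} {s : Finset ι} {w x : ι → ℝ}
    (hw : ∀ i ∈ s, 0 ≤ w i) (hw1 : ∑ i ∈ s, w i = 1) {m : ℝ} (hm : ∑ i ∈ s, w i * x i = m)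
    {j : ι} (hj : j ∈ s) :
    m ^ 2 + w j * (x j - m) ^ 2 ≤ ∑ i ∈ s, w i * x i ^ 2 := by
  have hvar : ∑ i ∈ s, w i * x i ^ 2 - m ^ 2 = ∑ i ∈ s, w i * (x i - m) ^ 2 := by
    have hexp : ∀ i, w i * (x i - m) ^ 2 = w i * x i ^ 2 - 2 * m * (w i * x i) + m ^ 2 * w i :=
      fun i => by ring
    simp only [hexp, sum_add_distrib, sum_sub_distrib, ← mul_sum, hw1, hm]
    ring
  have hj : w j * (x j - m) ^ 2 ≤ ∑ i ∈ s, w i * (x i - m) ^ 2 :=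
    single_le_sum (f := fun i => w i * (x i - m) ^ 2)
      (fun i hi => mul_nonneg (hw i hi) (sq_nonneg _)) hj
  linarith

section EdgesBetween

variable {X Y : Type*} (E : X → Y → Bool)

def edgesBetween (A : Finset X) (B : Finset Y) : Finset (X × Y) :=
  (A ×ˢ B).filter fun p => E p.1 p.2

theorem card_edgesBetween_add_sdiff_left [DecidableEq X] {A A' : Finset X} (h : A ⊆ A')
    (B : Finset Y) :
    #(edgesBetween E A B) + #(edgesBetween E (A' \ A) B) = #(edgesBetween E A' B) := by
  classical
  unfold edgesBetween
  rw [← card_union_of_disjoint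
    (disjoint_filter_filter (disjoint_product.2 (Or.inl disjoint_sdiff))),
    ← filter_union, ← union_product, union_sdiff_of_subset h]

theorem card_edgesBetween_add_sdiff_right [DecidableEq Y] (A : Finset X) {B B' : Finset Y}
    (h : B ⊆ B') :
    #(edgesBetween E A B) + #(edgesBetween E A (B' \ B)) = #(edgesBetween E A B') := by
  classical
  unfold edgesBetween
  rw [← card_union_of_disjoint
    (disjoint_filter_filter (disjoint_product.2 (Or.inr disjoint_sdiff))),
    ← filter_union, ← product_union, union_sdiff_of_subset h]

variable [Fintype X] [Fintype Y]

theorem dens_eq_card_edgesBetween_div (A : Finset X) (B : Finset Y) :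
    dens E A B = #(edgesBetween E A B) / ((#A : ℝ) * #B) := rfl

theorem dens_mul_card_mul_card (A : Finset X) (B : Finset Y) :
    dens E A B * ((#A : ℝ) * #B) = #(edgesBetween E A B) := by
  rw [dens_eq_card_edgesBetween_div]
  refine div_mul_cancel_of_imp fun h => ?_
  have hAB : #A * #B = 0 := by exact_mod_cast h
  have hle : #(edgesBetween E A B) ≤ #A * #B := card_product A B ▸ card_filter_le _ _
  rw [Nat.cast_eq_zero]
  omega

theorem dens_mul_card_div_mul_card_div (A : Finset X) (B : Finset Y) :
    dens E A B * ((#A : ℝ) / Fintype.card X * (#B / Fintype.card Y)) =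
      #(edgesBetween E A B) / ((Fintype.card X : ℝ) * Fintype.card Y) := by
  rw [div_mul_div_comm, ← mul_div_assoc, dens_mul_card_mul_card]

theorem dens_univ_eq_sum_cells [DecidableEq X] [DecidableEq Y] (A : Finset X) (B : Finset Y) :
    dens E univ univ =
      dens E A B * ((#A : ℝ) / Fintype.card X * (#B / Fintype.card Y)) +
      dens E A (univ \ B) * ((#A : ℝ) / Fintype.card X * (#(univ \ B) / Fintype.card Y)) +
      dens E (univ \ A) B * ((#(univ \ A) : ℝ) / Fintype.card X * (#B / Fintype.card Y)) +
      dens E (univ \ A) (univ \ B) *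
        ((#(univ \ A) : ℝ) / Fintype.card X * (#(univ \ B) / Fintype.card Y)) := by
  have hcells : #(edgesBetween E univ univ) =
      #(edgesBetween E A B) + #(edgesBetween E A (univ \ B)) +
        #(edgesBetween E (univ \ A) B) + #(edgesBetween E (univ \ A) (univ \ B)) := by
    rw [← card_edgesBetween_add_sdiff_left E (subset_univ A),
      ← card_edgesBetween_add_sdiff_right E A (subset_univ B),
      ← card_edgesBetween_add_sdiff_right E (univ \ A) (subset_univ B), add_assoc]
    omega
  rw [dens_mul_card_div_mul_card_div, dens_mul_card_div_mul_card_div, dens_mul_card_div_mul_card_div,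
    dens_mul_card_div_mul_card_div, ← add_div, ← add_div, ← add_div, dens_eq_card_edgesBetween_div,
    card_univ, card_univ, hcells]
  push_cast
  rfl

theorem card_div_add_card_univ_sdiff_div [Nonempty X] [DecidableEq X] (A : Finset X) :
    (#A : ℝ) / Fintype.card X + #(univ \ A) / Fintype.card X = 1 := by
  rw [← add_div, div_eq_one_iff_eq (by positivity), ← Nat.cast_add, add_comm,
    card_sdiff_add_card_eq_card (subset_univ A), card_univ]

/-- The energy `ρ` of the partition pair `({A, univ \ A}, {B, univ \ B})`. -/
noncomputable def cutEnergy [DecidableEq X] [DecidableEq Y] (A : Finset X) (B : Finset Y) : ℝ :=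
  dens E A B ^ 2 * ((#A : ℝ) / Fintype.card X) * (#B / Fintype.card Y) +
    dens E A (univ \ B) ^ 2 * ((#A : ℝ) / Fintype.card X) * (#(univ \ B) / Fintype.card Y) +
    dens E (univ \ A) B ^ 2 * ((#(univ \ A) : ℝ) / Fintype.card X) * (#B / Fintype.card Y) +
    dens E (univ \ A) (univ \ B) ^ 2 * ((#(univ \ A) : ℝ) / Fintype.card X) *
      (#(univ \ B) / Fintype.card Y)

theorem sq_dens_univ_add_le_cutEnergy [Nonempty X] [Nonempty Y] [DecidableEq X]
    [DecidableEq Y] (A : Finset X) (B : Finset Y) :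
    dens E univ univ ^ 2 +
        (#A : ℝ) / Fintype.card X * (#B / Fintype.card Y) * (dens E A B - dens E univ univ) ^ 2 ≤
      cutEnergy E A B := by
  have hcs := sq_add_mul_sq_sub_le_sum_mul_sq (s := univ) (j := 0) (m := dens E univ univ)
    (w := ![(#A : ℝ) / Fintype.card X * (#B / Fintype.card Y),
      (#A : ℝ) / Fintype.card X * (#(univ \ B) / Fintype.card Y),
      (#(univ \ A) : ℝ) / Fintype.card X * (#B / Fintype.card Y),
      (#(univ \ A) : ℝ) / Fintype.card X * (#(univ \ B) / Fintype.card Y)])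
    (x := ![dens E A B, dens E A (univ \ B), dens E (univ \ A) B, dens E (univ \ A) (univ \ B)])
    (fun i _ => by
      fin_cases i <;> simp only [Fin.zero_eta, Fin.mk_one, Fin.reduceFinMk, Matrix.cons_val] <;>
        positivity)
    (by
      simp only [Fin.sum_univ_four, Matrix.cons_val]
      linear_combination (#B / Fintype.card Y + #(univ \ B) / Fintype.card Y : ℝ) *
        card_div_add_card_univ_sdiff_div A + card_div_add_card_univ_sdiff_div B)
    (by
      simp only [Fin.sum_univ_four, Matrix.cons_val]
      linear_combination (dens_univ_eq_sum_cells E A B).symm)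
    (mem_univ _)
  simp only [Fin.sum_univ_four, Matrix.cons_val] at hcs
  unfold cutEnergy
  linear_combination hcs

end EdgesBetween

theorem energy_increment_general {X₀ Y₀ : Type*} [Fintype X₀] [Fintype Y₀]
    [DecidableEq X₀] [DecidableEq Y₀]
    (E : X₀ → Y₀ → Bool) (Xt : Finset X₀) (Yt : Finset Y₀) (r : ℝ) (hr : 1 ≤ r)
    (h1 : 1 / (10 * r ^ 4) ≤
      ((Xt.card : ℝ) / Fintype.card X₀) * ((Yt.card : ℝ) / Fintype.card Y₀))
    (h2 : dens E (univ : Finset X₀) (univ : Finset Y₀) + 1 / (10 * r) ≤ dens E Xt Yt) :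
    dens E (univ : Finset X₀) (univ : Finset Y₀) ^ 2 + 1 / (1000 * r ^ 6) ≤
      dens E Xt Yt ^ 2 * ((Xt.card : ℝ) / Fintype.card X₀) * ((Yt.card : ℝ) / Fintype.card Y₀) +
      dens E Xt (univ \ Yt) ^ 2 * ((Xt.card : ℝ) / Fintype.card X₀) *
        (((univ \ Yt : Finset Y₀).card : ℝ) / Fintype.card Y₀) +
      dens E (univ \ Xt) Yt ^ 2 * (((univ \ Xt : Finset X₀).card : ℝ) / Fintype.card X₀) *
        ((Yt.card : ℝ) / Fintype.card Y₀) +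
      dens E (univ \ Xt) (univ \ Yt) ^ 2 *
        (((univ \ Xt : Finset X₀).card : ℝ) / Fintype.card X₀) *
        (((univ \ Yt : Finset Y₀).card : ℝ) / Fintype.card Y₀) := by
  have hr0 : 0 < r := by linarith
  have hmass : 0 < (#Xt : ℝ) / Fintype.card X₀ * (#Yt / Fintype.card Y₀) :=
    lt_of_lt_of_le (by positivity) h1
  have : Nonempty X₀ := Fintype.card_pos_iff.1 (Nat.pos_of_ne_zero fun h => by simp [h] at hmass)
  have : Nonempty Y₀ := Fintype.card_pos_iff.1 (Nat.pos_of_ne_zero fun h => by simp [h] at hmass)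
  have hgain : 1 / (1000 * r ^ 6) ≤
      (#Xt : ℝ) / Fintype.card X₀ * (#Yt / Fintype.card Y₀) *
        (dens E Xt Yt - dens E univ univ) ^ 2 :=
    calc 1 / (1000 * r ^ 6) = 1 / (10 * r ^ 4) * (1 / (10 * r)) ^ 2 := by field_simp; ring
      _ ≤ _ := by gcongr; linarith
  exact (add_le_add_right hgain _).trans (sq_dens_univ_add_le_cutEnergy E Xt Yt)

/-- Defect Cauchy–Schwarz / energy increment: if `μ(X̃) μ(Ỹ) ≥ 1/(10 r⁴)` and
`d(X̃, Ỹ) ≥ d(X₀, Y₀) + 1/(10 r)`, then the partition pair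
`({X̃, X₀ \ X̃}, {Ỹ, Y₀ \ Ỹ})` has energy at least `d(X₀, Y₀)² + 1/(1000 r⁶)`. -/
theorem energy_increment {X₀ Y₀ : Type*} [Fintype X₀] [Fintype Y₀]
    [Nonempty X₀] [Nonempty Y₀] [DecidableEq X₀] [DecidableEq Y₀]
    (E : X₀ → Y₀ → Bool) (Xt : Finset X₀) (Yt : Finset Y₀) (r : ℝ) (hr : 1 ≤ r)
    (h1 : 1 / (10 * r ^ 4) ≤
      ((Xt.card : ℝ) / Fintype.card X₀) * ((Yt.card : ℝ) / Fintype.card Y₀))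
    (h2 : dens E (univ : Finset X₀) (univ : Finset Y₀) + 1 / (10 * r) ≤ dens E Xt Yt) :
    dens E (univ : Finset X₀) (univ : Finset Y₀) ^ 2 + 1 / (1000 * r ^ 6) ≤
      dens E Xt Yt ^ 2 * ((Xt.card : ℝ) / Fintype.card X₀) * ((Yt.card : ℝ) / Fintype.card Y₀) +
      dens E Xt (univ \ Yt) ^ 2 * ((Xt.card : ℝ) / Fintype.card X₀) *
        (((univ \ Yt : Finset Y₀).card : ℝ) / Fintype.card Y₀) +
      dens E (univ \ Xt) Yt ^ 2 * (((univ \ Xt : Finset X₀).card : ℝ) / Fintype.card X₀) *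
        ((Yt.card : ℝ) / Fintype.card Y₀) +
      dens E (univ \ Xt) (univ \ Yt) ^ 2 *
        (((univ \ Xt : Finset X₀).card : ℝ) / Fintype.card X₀) *
        (((univ \ Yt : Finset Y₀).card : ℝ) / Fintype.card Y₀) :=
  energy_increment_general E Xt Yt r hr h1 h2
end

section
/- Suppose P is a partition pair, and for every pair of indices (i,j) in the irregular set 𝕴(1/r, P) the refined partition satisfies ρ_{i,j}(P'_{i,j}) ≥ d(X_i,Y_j)² + 1/(1000·r⁶), while for all other (i,j), ρ_{i,j}(P'_{i,j}) ≥ d(X_i,Y_j)². If P is not 1/r-regular (i.e., Σ_{(i,j)∈𝕴} μ(X_i)μ(Y_j) ≥ 1/r), then ρ(P') ≥ ρ(P) + 1/(1000·r⁷). -/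
open Finset

/-- `(Xi, Yj)` is `ε`-regular for `E`. -/
def regularPair {X Y : Type*} [Fintype X] [Fintype Y] (E : X → Y → Bool) (ε : ℝ)
    (Xi : Finset X) (Yj : Finset Y) : Prop :=
  ∀ A ⊆ Xi, ∀ B ⊆ Yj, ε * Xi.card ≤ A.card → ε * Yj.card ≤ B.card →
    |dens E A B - dens E Xi Yj| < ε

/-- Energy (index) of a partition pair. -/
noncomputable def energy {X Y : Type*} [Fintype X] [Fintype Y] [DecidableEq X] [DecidableEq Y]
    (E : X → Y → Bool) (P : Finpartition (univ : Finset X))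
    (Q : Finpartition (univ : Finset Y)) : ℝ :=
  ∑ A ∈ P.parts, ∑ B ∈ Q.parts,
    dens E A B ^ 2 * ((A.card : ℝ) / Fintype.card X) * ((B.card : ℝ) / Fintype.card Y)

open scoped Classical in
/-- If each irregular pair of `P` gains `1/(1000 r⁶)` in relative energy after refining,
each regular pair does not lose, and the irregular pairs have total measure at least `1/r`,
then the refined energy exceeds `ρ(P)` by at least `1/(1000 r⁷)`. -/
theorem energy_boost {X Y : Type*} [Fintype X] [Fintype Y] [DecidableEq X] [DecidableEq Y]
    [Nonempty X] [Nonempty Y] (E : X → Y → Bool)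
    (P : Finpartition (univ : Finset X)) (Q : Finpartition (univ : Finset Y))
    (r : ℝ) (hr : 1 ≤ r) (ρloc : Finset X → Finset Y → ℝ)
    (hreg : ∀ Xi ∈ P.parts, ∀ Yj ∈ Q.parts, dens E Xi Yj ^ 2 ≤ ρloc Xi Yj)
    (hirr : ∀ Xi ∈ P.parts, ∀ Yj ∈ Q.parts, ¬ regularPair E (1 / r) Xi Yj →
      dens E Xi Yj ^ 2 + 1 / (1000 * r ^ 6) ≤ ρloc Xi Yj)
    (hmass : 1 / r ≤ ∑ Xi ∈ P.parts, ∑ Yj ∈ Q.parts,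
      if ¬ regularPair E (1 / r) Xi Yj then
        ((Xi.card : ℝ) / Fintype.card X) * ((Yj.card : ℝ) / Fintype.card Y) else 0) :
    energy E P Q + 1 / (1000 * r ^ 7) ≤
      ∑ Xi ∈ P.parts, ∑ Yj ∈ Q.parts,
        ρloc Xi Yj * ((Xi.card : ℝ) / Fintype.card X) * ((Yj.card : ℝ) / Fintype.card Y) := by
  
  have hr0 : (0:ℝ) < r := lt_of_lt_of_le one_pos hr
  set c : ℝ := 1 / (1000 * r ^ 6) with hc
  have hc0 : 0 < c := by positivity
  have key : ∀ Xi ∈ P.parts, ∀ Yj ∈ Q.parts,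
      dens E Xi Yj ^ 2 * ((Xi.card:ℝ)/Fintype.card X) * ((Yj.card:ℝ)/Fintype.card Y)
        + c * (if ¬ regularPair E (1/r) Xi Yj then
            ((Xi.card:ℝ)/Fintype.card X) * ((Yj.card:ℝ)/Fintype.card Y) else 0)
      ≤ ρloc Xi Yj * ((Xi.card:ℝ)/Fintype.card X) * ((Yj.card:ℝ)/Fintype.card Y) := by
    intro Xi hXi Yj hYj
    have hμ : 0 ≤ ((Xi.card:ℝ)/Fintype.card X) * ((Yj.card:ℝ)/Fintype.card Y) := by positivity
    by_cases h : regularPair E (1/r) Xi Yj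
    · simp only [h, not_true_eq_false, if_false]
      nlinarith [hreg Xi hXi Yj hYj]
    · simp only [h, not_false_eq_true, if_true]
      nlinarith [hirr Xi hXi Yj hYj h]
  have hsum : energy E P Q + c * (∑ Xi ∈ P.parts, ∑ Yj ∈ Q.parts,
      if ¬ regularPair E (1/r) Xi Yj then
        ((Xi.card:ℝ)/Fintype.card X) * ((Yj.card:ℝ)/Fintype.card Y) else 0)
      ≤ ∑ Xi ∈ P.parts, ∑ Yj ∈ Q.parts,
        ρloc Xi Yj * ((Xi.card:ℝ)/Fintype.card X) * ((Yj.card:ℝ)/Fintype.card Y) := by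
    rw [energy, Finset.mul_sum, ← Finset.sum_add_distrib]
    apply Finset.sum_le_sum
    intro Xi hXi
    rw [Finset.mul_sum, ← Finset.sum_add_distrib]
    exact Finset.sum_le_sum fun Yj hYj => key Xi hXi Yj hYj
  have h7 : 1 / (1000 * r ^ 7) = c * (1/r) := by
    rw [hc]; field_simp
  have := mul_le_mul_of_nonneg_left hmass hc0.le
  linarith
end

section
/- If E ⊆ X × Y has VC dimension at most d and Y' ⊆ Y, X' ⊆ X, then the family {E_x \ E_{x'} : x,x' ∈ X} restricted to Y has VC dimension bounded by a constant multiple of d; consequently, by the ε-net theorem, for each r ≥ 2 there is a set Ŷ ⊆ Y of size O(d·r·log r) such that any x, x' with E_x ∩ Ŷ = E_{x'} ∩ Ŷ satisfy μ(E_x △ E_{x'}) ≤ 1/r. -/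
/-!
The rows `E_x` form a set family `𝒜` of VC dimension at most `d`. By Sauer–Shelah `𝒜` has at
most `(e|W|/d)^d` traces on a set `W`, and the family of differences `A \ B` at most the square
of that; so a set of size `m` shattered by the differences satisfies `2^m ≤ (em/d)^{2d}`, which
forces `m ≤ 64d`.

For the net, apply the ε-net theorem with `ε = 1/(2r)` to the difference family: if `E_x` and
`E_{x'}` agree on the net, then `E_x \ E_{x'}` and `E_{x'} \ E_x` both miss it, so each has
measure at most `1/(2r)`. The ε-net theorem is the double-sampling argument of Haussler–Welzl. If
every sample `s` of size `m` missed some heavy set `D`, then by Chebyshev an independent second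
sample `t` would hit that `D` at least `T ≈ m/(2r)` times with probability `≥ 1/2`. But for a
fixed pair `(s, t)`, exchanging `s i` and `t i` on a random set of indices makes a given trace on
`s ∪ t` miss the first half and hit the second half `T` times with probability at most `2^{-T}`,
and a family of VC dimension `k` has at most `(2em/k)^k` traces there.
-/

open Finset Real
open scoped symmDiff

theorem sum_Iic_choose_le_exp_mul_div_pow {d n : ℕ} (hd : 1 ≤ d) (hdn : d ≤ n) :
    (∑ k ∈ Iic d, n.choose k : ℝ) ≤ (exp 1 * n / d) ^ d := by
  have hn₀ : (0 : ℝ) < n := by exact_mod_cast hd.trans hdn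
  set x : ℝ := d / n
  have hx₀ : 0 < x := by positivity
  have hx₁ : x ≤ 1 := div_le_one_of_le₀ (by exact_mod_cast hdn) hn₀.le
  have hnx : n * x = d := mul_div_cancel₀ _ hn₀.ne'
  have key : (∑ k ∈ Iic d, n.choose k : ℝ) * x ^ d ≤ exp 1 ^ d :=
    calc (∑ k ∈ Iic d, n.choose k : ℝ) * x ^ d ≤ ∑ k ∈ Iic d, (n.choose k : ℝ) * x ^ k := by
          rw [sum_mul]
          exact sum_le_sum fun k hk => mul_le_mul_of_nonneg_left
            (pow_le_pow_of_le_one hx₀.le hx₁ (mem_Iic.1 hk)) (by positivity)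
      _ ≤ ∑ k ∈ range (n + 1), (n.choose k : ℝ) * x ^ k := by
          refine sum_le_sum_of_subset_of_nonneg (fun k hk => ?_) fun _ _ _ => by positivity
          simp only [mem_Iic, mem_range] at hk ⊢
          omega
      _ = (x + 1) ^ n := by simp [add_pow, mul_comm]
      _ ≤ exp x ^ n := by gcongr; linarith [add_one_le_exp x]
      _ = exp 1 ^ d := by rw [← exp_nat_mul, ← exp_nat_mul, hnx, mul_one]
  calc (∑ k ∈ Iic d, n.choose k : ℝ) = (∑ k ∈ Iic d, n.choose k : ℝ) * x ^ d / x ^ d := by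
        field_simp
    _ ≤ exp 1 ^ d / x ^ d := by gcongr
    _ = (exp 1 * n / d) ^ d := by rw [← div_pow, ← hnx]; field_simp

theorem le_of_two_pow_le_exp_mul_div_pow_sq {d m : ℕ} (hd : 1 ≤ d)
    (h : (2 : ℝ) ^ m ≤ ((exp 1 * m / d) ^ d) ^ 2) : m ≤ 64 * d := by
  by_contra! hm
  have hd₀ : (0 : ℝ) < d := by exact_mod_cast hd
  set y : ℝ := m / (64 * d)
  have hy : 1 < y := by rw [one_lt_div (by positivity)]; exact_mod_cast hm
  have hm_eq : (m : ℝ) = 64 * d * y := by simp only [y]; field_simp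
  have hlog : log (exp 1 * m / d) ≤ 6 * log 2 + y := by
    have : exp 1 * m / d = exp 1 * (2 ^ 6 * y) := by rw [hm_eq]; field_simp; norm_num
    rw [this, log_mul (by positivity) (by positivity), log_mul (by positivity) (by positivity),
      log_exp, log_pow]
    push_cast
    linarith [log_le_sub_one_of_pos (by linarith : 0 < y)]
  have hpow : (m : ℝ) * log 2 ≤ 2 * d * (6 * log 2 + y) := by
    have := log_le_log (by positivity) h
    rw [← pow_mul, log_pow, log_pow] at this
    push_cast at this
    nlinarith [mul_le_mul_of_nonneg_left hlog (by positivity : (0 : ℝ) ≤ 2 * d)]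
  rw [hm_eq] at hpow
  have hlog₂ := log_two_gt_d9
  nlinarith [mul_pos hd₀ (by nlinarith : 0 < (y - 1) * (64 * log 2 - 2) + 52 * log 2 - 2)]

namespace Finset

variable {α : Type*} [DecidableEq α]

theorem card_image_inter_le_sum_choose (𝒜 : Finset (Finset α)) (W : Finset α) :
    #(𝒜.image (W ∩ ·)) ≤ ∑ k ∈ Iic 𝒜.vcDim, (#W).choose k := by
  calc #(𝒜.image (W ∩ ·)) ≤ #(𝒜.image (W ∩ ·)).shatterer := card_le_card_shatterer _
    _ ≤ #((Iic 𝒜.vcDim).biUnion W.powersetCard) := card_le_card fun s hs => ?_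
    _ ≤ ∑ k ∈ Iic 𝒜.vcDim, #(W.powersetCard k) := card_biUnion_le
    _ = ∑ k ∈ Iic 𝒜.vcDim, (#W).choose k := by simp_rw [card_powersetCard]
  rw [mem_shatterer] at hs
  obtain ⟨_, hu, hsu⟩ := hs.exists_superset
  obtain ⟨u, -, rfl⟩ := mem_image.1 hu
  have hsW : s ⊆ W := hsu.trans inter_subset_left
  have h𝒜s : 𝒜.Shatters s := fun t ht => by
    obtain ⟨_, hv, rfl⟩ := hs ht
    obtain ⟨v, hv𝒜, rfl⟩ := mem_image.1 hv
    exact ⟨v, hv𝒜, by rw [← inter_assoc, inter_eq_left.2 hsW]⟩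
  exact mem_biUnion.2 ⟨#s, mem_Iic.2 h𝒜s.card_le_vcDim, mem_powersetCard.2 ⟨hsW, rfl⟩⟩

theorem card_image_inter_image₂_le_sq {f : Finset α → Finset α → Finset α}
    (hf : ∀ W A B, W ∩ f A B = f (W ∩ A) (W ∩ B)) (𝒜 : Finset (Finset α)) (W : Finset α) :
    #((image₂ f 𝒜 𝒜).image (W ∩ ·)) ≤ #(𝒜.image (W ∩ ·)) ^ 2 := by
  rw [image_image₂, sq]
  calc _ = #(image₂ f (𝒜.image (W ∩ ·)) (𝒜.image (W ∩ ·))) := by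
        rw [image₂_image_left, image₂_image_right]; simp_rw [hf]
    _ ≤ _ := card_image₂_le _ _ _

theorem vcDim_image₂_le {f : Finset α → Finset α → Finset α}
    (hf : ∀ W A B, W ∩ f A B = f (W ∩ A) (W ∩ B)) {𝒜 : Finset (Finset α)} {d : ℕ} (hd : 1 ≤ d)
    (h𝒜 : 𝒜.vcDim ≤ d) : (image₂ f 𝒜 𝒜).vcDim ≤ 64 * d := by
  refine Finset.sup_le fun s hs => ?_
  by_cases hsd : #s ≤ d
  · omega
  refine le_of_two_pow_le_exp_mul_div_pow_sq hd ?_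
  calc (2 : ℝ) ^ #s = #((image₂ f 𝒜 𝒜).image (s ∩ ·)) := by
        rw [shatters_iff.1 (mem_shatterer.1 hs), card_powerset]; push_cast; rfl
    _ ≤ (#(𝒜.image (s ∩ ·)) : ℝ) ^ 2 := by
        exact_mod_cast card_image_inter_image₂_le_sq hf 𝒜 s
    _ ≤ (∑ k ∈ Iic d, (#s).choose k : ℝ) ^ 2 := by
        gcongr
        exact_mod_cast (card_image_inter_le_sum_choose 𝒜 s).trans
          (sum_le_sum_of_subset (Iic_subset_Iic.2 h𝒜))
    _ ≤ ((exp 1 * #s / d) ^ d) ^ 2 := by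
        gcongr; exact sum_Iic_choose_le_exp_mul_div_pow hd (by omega)

end Finset

section SecondMoment

open Fintype (card)

variable {ι α : Type*} [Fintype ι] [DecidableEq ι] [Fintype α]

theorem sum_apply_eq_card_pow_mul_sum (f : α → ℝ) (i : ι) :
    ∑ t : ι → α, f (t i) = card α ^ (card ι - 1) * ∑ y, f y := by
  rw [← (Equiv.funSplitAt i α).symm.sum_comp, Fintype.sum_prod_type]
  simp [Equiv.funSplitAt, Equiv.piSplitAt, mul_sum]

theorem sum_apply_mul_apply_eq_zero (f g : α → ℝ) (hf : ∑ y, f y = 0) {i j : ι} (hij : j ≠ i) :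
    ∑ t : ι → α, f (t i) * g (t j) = 0 := by
  rw [← (Equiv.funSplitAt i α).symm.sum_comp, Fintype.sum_prod_type]
  simp [Equiv.funSplitAt, Equiv.piSplitAt, hij, ← mul_sum, ← sum_mul, hf]

theorem sum_sq_sum_apply_eq (Z : α → ℝ) (hZ : ∑ y, Z y = 0) :
    ∑ t : ι → α, (∑ i, Z (t i)) ^ 2 = card ι * card α ^ (card ι - 1) * ∑ y, Z y ^ 2 := by
  have hdiag (i : ι) : ∑ t : ι → α, ∑ j, Z (t i) * Z (t j) = ∑ t : ι → α, Z (t i) ^ 2 := by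
    rw [sum_comm, sum_eq_single i (fun j _ hj => sum_apply_mul_apply_eq_zero Z Z hZ hj) (by simp)]
    simp_rw [sq]
  calc ∑ t : ι → α, (∑ i, Z (t i)) ^ 2 = ∑ t : ι → α, ∑ i, ∑ j, Z (t i) * Z (t j) := by
        simp_rw [sq, Finset.sum_mul_sum]
    _ = ∑ i, ∑ t : ι → α, Z (t i) ^ 2 := by rw [sum_comm]; simp_rw [hdiag]
    _ = card ι * card α ^ (card ι - 1) * ∑ y, Z y ^ 2 := by
        simp_rw [sum_apply_eq_card_pow_mul_sum (Z · ^ 2)]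
        simp [mul_assoc]

theorem sum_sq_card_filter_mem_sub_le [DecidableEq α] [Nonempty α] (D : Finset α) :
    ∑ t : ι → α, ((#{i | t i ∈ D} : ℝ) - card ι * (#D / card α)) ^ 2 ≤
      card ι * card α ^ (card ι - 1) * #D := by
  have hn : (card α : ℝ) ≠ 0 := by simp [Fintype.card_ne_zero]
  set q : ℝ := #D / card α
  let Z : α → ℝ := fun y => (if y ∈ D then 1 else 0) - q
  have hZ : ∑ y, Z y = 0 := by
    simp only [Z, sum_sub_distrib, sum_boole, sum_const, card_univ, nsmul_eq_mul]
    simp [q, mul_div_cancel₀ _ hn]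
  have hZ₂ : ∑ y, Z y ^ 2 ≤ #D := by
    have : ∑ y, Z y ^ 2 = ∑ y, Z y * (if y ∈ D then 1 else 0) - q * ∑ y, Z y := by
      simp only [mul_sum, ← sum_sub_distrib, Z]; congr 1; ext y; ring
    rw [this, hZ, mul_zero, sub_zero]
    have hq : 0 ≤ q := by positivity
    simp only [mul_boole, Fintype.sum_ite_mem]
    exact (sum_le_card_nsmul _ _ 1 fun y hy => by simp only [Z, if_pos hy]; linarith).trans
      (by simp)
  have hsum (t : ι → α) : ∑ i, Z (t i) = #{i | t i ∈ D} - card ι * q := by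
    rw [natCast_card_filter]
    simp only [Z, sum_sub_distrib, sum_const, card_univ, nsmul_eq_mul]
  simp_rw [← hsum, sum_sq_sum_apply_eq Z hZ]
  gcongr

theorem pow_card_le_two_mul_card_filter_le_card_filter_mem [DecidableEq α] [Nonempty α]
    (D : Finset α) {r : ℝ} {T : ℕ} (hD : (card α : ℝ) < #D * r) (hm : 8 * r ≤ card ι)
    (hT : ((T : ℝ) - 1) * (2 * r) ≤ card ι) :
    card α ^ card ι ≤ 2 * #{t : ι → α | T ≤ #{i | t i ∈ D}} := by
  set n : ℝ := (card α : ℝ)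
  set m : ℝ := (card ι : ℝ)
  have hn : 0 < n := by simp [n, Fintype.card_pos]
  have hr : 0 < r := pos_of_mul_pos_right (hn.trans hD) (Nat.cast_nonneg _)
  set q : ℝ := #D / n
  have hrq : 1 < r * q := by rw [mul_div_assoc', lt_div_iff₀ hn]; linarith
  have hmq : 8 ≤ m * q := by nlinarith
  set bad := ({t : ι → α | ¬ T ≤ #{i | t i ∈ D}} : Finset _)
  -- Fewer than `T` hits means at most `m / (2r) < m q / 2` hits, half the mean `m q`.
  have hbad : ∀ t ∈ bad, (m * q / 2) ^ 2 ≤ ((#{i | t i ∈ D} : ℝ) - m * q) ^ 2 := by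
    intro t ht
    have hX : (#{i | t i ∈ D} : ℝ) + 1 ≤ T := by
      exact_mod_cast Nat.lt_of_not_le (mem_filter.1 ht).2
    have hXq : (#{i | t i ∈ D} : ℝ) * (2 * r) ≤ m * q / 2 * (2 * r) := by nlinarith
    nlinarith [le_of_mul_le_mul_right hXq (by positivity)]
  have hcheb : #bad * (m * q / 2) ^ 2 ≤ m * n ^ (card ι - 1) * #D :=
    calc #bad * (m * q / 2) ^ 2 ≤ ∑ t ∈ bad, ((#{i | t i ∈ D} : ℝ) - m * q) ^ 2 := by
          rw [← nsmul_eq_mul]; exact card_nsmul_le_sum _ _ _ hbad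
      _ ≤ ∑ t : ι → α, ((#{i | t i ∈ D} : ℝ) - m * q) ^ 2 :=
          sum_le_sum_of_subset_of_nonneg (subset_univ _) fun _ _ _ => by positivity
      _ ≤ m * n ^ (card ι - 1) * #D := sum_sq_card_filter_mem_sub_le D
  have hbad₂ : 2 * #bad ≤ card α ^ card ι := by
    have hm₁ : 0 < card ι := Nat.cast_pos.1 (show (0 : ℝ) < m by linarith)
    have hpow : n ^ card ι = n * n ^ (card ι - 1) := by rw [← pow_succ', Nat.sub_add_cancel hm₁]
    have hDn : (#D : ℝ) = n * q := (mul_div_cancel₀ _ hn.ne').symm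
    have : (#bad : ℝ) * (m * q) * (m * q) ≤ 4 * n ^ card ι * (m * q) := by
      rw [hpow]; rw [hDn] at hcheb; nlinarith
    have := le_of_mul_le_mul_right this (by linarith)
    have : ((2 * #bad : ℕ) : ℝ) ≤ ((card α ^ card ι : ℕ) : ℝ) := by push_cast; nlinarith
    exact_mod_cast this
  have hsplit : #{t : ι → α | T ≤ #{i | t i ∈ D}} + #bad = card α ^ card ι := by
    rw [card_filter_add_card_filter_not, card_univ, Fintype.card_fun]
  omega

end SecondMoment

section DoubleSampling

open Fintype (card)

variable {ι α : Type*}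

def swapAt [DecidableEq ι] (σ : Finset ι) (p : (ι → α) × (ι → α)) : (ι → α) × (ι → α) :=
  (fun i => if i ∈ σ then p.2 i else p.1 i, fun i => if i ∈ σ then p.1 i else p.2 i)

theorem swapAt_involutive [DecidableEq ι] (σ : Finset ι) :
    Function.Involutive (swapAt (α := α) σ) := by
  intro p; ext i <;> by_cases hi : i ∈ σ <;> simp [swapAt, hi]

theorem swapAt_mem_of_forall_mem [DecidableEq ι] {W : Set α} {p : (ι → α) × (ι → α)}
    (hW : ∀ i, p.1 i ∈ W ∧ p.2 i ∈ W) (σ : Finset ι) (i : ι) :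
    (swapAt σ p).1 i ∈ W ∧ (swapAt σ p).2 i ∈ W := by
  by_cases hi : i ∈ σ <;> simp [swapAt, hi, hW i]

theorem card_filter_swapAt [DecidableEq ι] [Fintype ι] [Fintype α] (σ : Finset ι)
    (P : (ι → α) × (ι → α) → Prop) [DecidablePred P] : #{p | P (swapAt σ p)} = #{p | P p} :=
  card_equiv (swapAt_involutive σ).toPerm fun p => by simp

variable [Fintype ι] [DecidableEq α]

def MissesThenHits (T : ℕ) (D : Finset α) (p : (ι → α) × (ι → α)) : Prop :=
  (∀ i, p.1 i ∉ D) ∧ T ≤ #{i | p.2 i ∈ D}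

instance (T : ℕ) (D : Finset α) : DecidablePred (MissesThenHits (ι := ι) T D) :=
  fun _ => by unfold MissesThenHits; infer_instance

theorem missesThenHits_inter_iff {T : ℕ} {D W : Finset α} {p : (ι → α) × (ι → α)}
    (hW : ∀ i, p.1 i ∈ W ∧ p.2 i ∈ W) : MissesThenHits T (W ∩ D) p ↔ MissesThenHits T D p := by
  simp [MissesThenHits, hW]

variable [DecidableEq ι]

/-- An admissible exchange `σ` must contain every index where only `p.1 i` lies in `D` and avoid
every index where `p.2 i` does, and at least `T` indices are of one of these two kinds. -/
theorem card_filter_missesThenHits_swapAt_le (T : ℕ) (D : Finset α) (p : (ι → α) × (ι → α)) :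
    #{σ : Finset ι | MissesThenHits T D (swapAt σ p)} ≤ 2 ^ (card ι - T) := by
  rcases eq_empty_or_nonempty ({σ : Finset ι | MissesThenHits T D (swapAt σ p)} : Finset _)
    with h | ⟨σ₀, hσ₀⟩
  · simp [h]
  set S₁ : Finset ι := {i | p.1 i ∈ D}
  set S₂ : Finset ι := {i | p.2 i ∈ D}
  have hforced (σ : Finset ι) (hσ : MissesThenHits T D (swapAt σ p)) :
      S₁ ⊆ σ ∧ σ ⊆ univ \ S₂ := by
    constructor <;> intro i hi <;> have := hσ.1 i
    · by_contra hiσ; simp_all [swapAt, S₁]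
    · simp_all [swapAt, S₂]
  have hT : T ≤ #S₁ + #S₂ := by
    refine (mem_filter.1 hσ₀).2.2.trans <|
      (card_le_card fun i hi => ?_).trans (card_union_le S₁ S₂)
    have := (mem_filter.1 hi).2
    by_cases hiσ : i ∈ σ₀ <;> simp [swapAt, hiσ] at this <;> simp [S₁, S₂, this]
  have hS := hforced σ₀ (mem_filter.1 hσ₀).2
  calc #{σ : Finset ι | MissesThenHits T D (swapAt σ p)} ≤ #(Icc S₁ (univ \ S₂)) :=
        card_le_card fun σ hσ => mem_Icc.2 (hforced σ (mem_filter.1 hσ).2)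
    _ = 2 ^ (card ι - #S₂ - #S₁) := by
        rw [card_Icc_finset (hS.1.trans hS.2), card_sdiff_of_subset (subset_univ _), card_univ]
    _ ≤ 2 ^ (card ι - T) := Nat.pow_le_pow_right (by norm_num) (by omega)

theorem card_filter_exists_missesThenHits_swapAt_le (𝒟 : Finset (Finset α)) (T : ℕ)
    {p : (ι → α) × (ι → α)} {W : Finset α} (hW : ∀ i, p.1 i ∈ W ∧ p.2 i ∈ W) :
    #{σ : Finset ι | ∃ D ∈ 𝒟, MissesThenHits T D (swapAt σ p)} ≤
      #(𝒟.image (W ∩ ·)) * 2 ^ (card ι - T) := by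
  calc #{σ : Finset ι | ∃ D ∈ 𝒟, MissesThenHits T D (swapAt σ p)}
      ≤ #((𝒟.image (W ∩ ·)).biUnion fun G => {σ : Finset ι | MissesThenHits T G (swapAt σ p)}) :=
        card_le_card fun σ hσ => ?_
    _ ≤ ∑ G ∈ 𝒟.image (W ∩ ·), #{σ : Finset ι | MissesThenHits T G (swapAt σ p)} :=
        card_biUnion_le
    _ ≤ #(𝒟.image (W ∩ ·)) * 2 ^ (card ι - T) := by
        rw [← smul_eq_mul]
        exact sum_le_card_nsmul _ _ _ fun G _ => card_filter_missesThenHits_swapAt_le T G p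
  obtain ⟨D, hD, hσD⟩ := (mem_filter.1 hσ).2
  have hW' := swapAt_mem_of_forall_mem (W := (W : Set α)) hW σ
  exact mem_biUnion.2 ⟨W ∩ D, mem_image_of_mem _ hD,
    mem_filter.2 ⟨mem_univ _, (missesThenHits_inter_iff hW').2 hσD⟩⟩

theorem card_filter_exists_missesThenHits_mul_le [Fintype α] (𝒟 : Finset (Finset α))
    {T Φ : ℕ} (htrace : ∀ W : Finset α, #W ≤ 2 * card ι → #(𝒟.image (W ∩ ·)) ≤ Φ) :
    #{p : (ι → α) × (ι → α) | ∃ D ∈ 𝒟, MissesThenHits T D p} * 2 ^ card ι ≤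
      (card α ^ card ι) ^ 2 * (Φ * 2 ^ (card ι - T)) := by
  calc #{p : (ι → α) × (ι → α) | ∃ D ∈ 𝒟, MissesThenHits T D p} * 2 ^ card ι
      = ∑ σ : Finset ι, #{p : (ι → α) × (ι → α) | ∃ D ∈ 𝒟, MissesThenHits T D (swapAt σ p)} := by
        rw [sum_congr rfl fun σ _ => card_filter_swapAt σ fun p => ∃ D ∈ 𝒟, MissesThenHits T D p,
          sum_const, card_univ, Fintype.card_finset, smul_eq_mul, mul_comm]
    _ = ∑ p : (ι → α) × (ι → α), #{σ : Finset ι | ∃ D ∈ 𝒟, MissesThenHits T D (swapAt σ p)} := by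
        simp only [card_filter]; exact sum_comm
    _ ≤ ∑ _p : (ι → α) × (ι → α), Φ * 2 ^ (card ι - T) := sum_le_sum fun p _ => by
        refine (card_filter_exists_missesThenHits_swapAt_le 𝒟 T
          (W := univ.image p.1 ∪ univ.image p.2) fun i => by simp).trans ?_
        gcongr
        refine htrace _ ((card_union_le _ _).trans ?_)
        simpa [two_mul] using add_le_add (card_image_le (s := univ)) (card_image_le (s := univ))
    _ = (card α ^ card ι) ^ 2 * (Φ * 2 ^ (card ι - T)) := by simp [sq]

theorem pow_card_sq_le_two_mul_card_filter_exists_missesThenHits [Fintype α]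
    {𝒟 : Finset (Finset α)} {T : ℕ} (hmiss : ∀ s : ι → α, ∃ D ∈ 𝒟, ∀ i, s i ∉ D)
    (hheavy : ∀ D ∈ 𝒟, card α ^ card ι ≤ 2 * #{t : ι → α | T ≤ #{i | t i ∈ D}}) :
    (card α ^ card ι) ^ 2 ≤
      2 * #{p : (ι → α) × (ι → α) | ∃ D ∈ 𝒟, MissesThenHits T D p} := by
  choose D hD hsD using hmiss
  calc (card α ^ card ι) ^ 2 = ∑ _s : ι → α, card α ^ card ι := by simp [sq]
    _ ≤ ∑ s : ι → α, 2 * #{t : ι → α | T ≤ #{i | t i ∈ D s}} :=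
        sum_le_sum fun s _ => hheavy _ (hD s)
    _ = 2 * #{p : (ι → α) × (ι → α) | T ≤ #{i | p.2 i ∈ D p.1}} := by
        simp only [← mul_sum, card_filter, Fintype.sum_prod_type]
    _ ≤ 2 * #{p : (ι → α) × (ι → α) | ∃ D ∈ 𝒟, MissesThenHits T D p} := by
        gcongr with p
        exact fun hp => ⟨D p.1, hD _, hsD _, hp⟩

theorem exists_forall_exists_apply_mem [Fintype α] [Nonempty α] (𝒟 : Finset (Finset α))
    {T Φ : ℕ} (hT : T ≤ card ι)
    (htrace : ∀ W : Finset α, #W ≤ 2 * card ι → #(𝒟.image (W ∩ ·)) ≤ Φ)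
    (hheavy : ∀ D ∈ 𝒟, card α ^ card ι ≤ 2 * #{t : ι → α | T ≤ #{i | t i ∈ D}})
    (hΦ : 2 * Φ < 2 ^ T) : ∃ s : ι → α, ∀ D ∈ 𝒟, ∃ i, s i ∈ D := by
  by_contra! hmiss
  have hlow := pow_card_sq_le_two_mul_card_filter_exists_missesThenHits hmiss hheavy
  have hup := card_filter_exists_missesThenHits_mul_le 𝒟 htrace (T := T)
  set N := (card α ^ card ι) ^ 2
  have hsplit : 2 ^ card ι = 2 ^ (card ι - T) * 2 ^ T := by
    rw [← pow_add, Nat.sub_add_cancel hT]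
  have : N * 2 ^ (card ι - T) * 2 ^ T ≤ N * 2 ^ (card ι - T) * (2 * Φ) :=
    calc N * 2 ^ (card ι - T) * 2 ^ T = N * 2 ^ card ι := by rw [hsplit, mul_assoc]
      _ ≤ 2 * #{p : (ι → α) × (ι → α) | ∃ D ∈ 𝒟, MissesThenHits T D p} * 2 ^ card ι := by
        gcongr
      _ ≤ 2 * (N * (Φ * 2 ^ (card ι - T))) := by rw [mul_assoc]; gcongr
      _ = N * 2 ^ (card ι - T) * (2 * Φ) := by ring
  exact (le_of_mul_le_mul_left this (by positivity)).not_gt hΦ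

end DoubleSampling

theorem two_mul_sum_choose_lt_two_pow {k m T : ℕ} {r : ℝ} (hk : 1 ≤ k) (hr : 2 ≤ r)
    (hkm : k ≤ 2 * m) (hm : (m : ℝ) ≤ 65 * k * r * log r) (hT : 32 * k * log r ≤ T) :
    2 * ∑ j ∈ Iic k, (2 * m).choose j < 2 ^ T := by
  set L := log r
  have hL : log 2 ≤ L := log_le_log (by norm_num) hr
  have hl₂ := log_two_gt_d9
  have hr₀ : 0 < r := by linarith
  have hL₀ : 0 < L := by linarith
  have hk₀ : (1 : ℝ) ≤ k := by exact_mod_cast hk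
  have hmk : (2 * m : ℝ) / k ≤ 130 * (r * L) := by
    rw [div_le_iff₀ (by positivity)]; nlinarith
  have hbase : exp 1 * ↑(2 * m) / k ≤ 2 ^ 9 * (r * L) := by
    have := exp_one_lt_d9
    rw [Nat.cast_mul, Nat.cast_two, mul_div_assoc]
    nlinarith [div_nonneg (by positivity : (0 : ℝ) ≤ 2 * m) (by positivity : (0 : ℝ) ≤ k)]
  have hlog_base : log (exp 1 * ↑(2 * m) / k) ≤ 9 * log 2 + 2 * L := by
    have hm₀ : (0 : ℝ) < ↑(2 * m) := by norm_cast; omega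
    calc log (exp 1 * ↑(2 * m) / k) ≤ log (2 ^ 9 * (r * L)) :=
          log_le_log (div_pos (mul_pos (exp_pos 1) hm₀) (by positivity)) hbase
      _ = 9 * log 2 + (L + log L) := by
          rw [log_mul (by positivity) (mul_pos hr₀ hL₀).ne', log_mul hr₀.ne' hL₀.ne', log_pow]
          push_cast; ring
      _ ≤ 9 * log 2 + 2 * L := by linarith [log_le_sub_one_of_pos (by linarith : 0 < L)]
  set Φ : ℕ := ∑ j ∈ Iic k, (2 * m).choose j
  have hΦ₀ : (0 : ℝ) < Φ := by
    have : 0 < Φ := sum_pos' (fun _ _ => Nat.zero_le _) ⟨0, by simp⟩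
    exact_mod_cast this
  have hlogΦ : log Φ ≤ k * (9 * log 2 + 2 * L) := by
    have hΦ := sum_Iic_choose_le_exp_mul_div_pow hk hkm
    rw [← Nat.cast_sum] at hΦ
    refine (log_le_log hΦ₀ hΦ).trans ?_
    rw [log_pow]; gcongr
  have hlog : log (2 * Φ) < log (2 ^ T) := by
    rw [log_mul (by norm_num) hΦ₀.ne', log_pow]
    have hkL : log 2 ≤ k * L := by nlinarith
    nlinarith [mul_le_mul_of_nonneg_right hT (by linarith : (0 : ℝ) ≤ log 2)]
  exact_mod_cast (log_lt_log_iff (by positivity) (by positivity)).1 hlog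

theorem exists_epsNet {α : Type*} [Fintype α] [DecidableEq α] [Nonempty α]
    (𝒟 : Finset (Finset α)) {k : ℕ} (hk : 1 ≤ k) (h𝒟 : 𝒟.vcDim ≤ k) {r : ℝ} (hr : 2 ≤ r) :
    ∃ N : Finset α, (#N : ℝ) ≤ 65 * k * r * log r ∧
      ∀ D ∈ 𝒟, (Fintype.card α : ℝ) < #D * r → (D ∩ N).Nonempty := by
  have hL : log 2 ≤ log r := log_le_log (by norm_num) hr
  have hl₂ := log_two_gt_d9
  have hk₀ : (1 : ℝ) ≤ k := by exact_mod_cast hk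
  have hkr : 2 ≤ k * r := by nlinarith
  have hkrL : 1 ≤ k * r * log r := by nlinarith
  set m := ⌈64 * k * r * log r⌉₊
  set T := ⌈m / (2 * r)⌉₊
  have hm₁ : 64 * k * r * log r ≤ m := Nat.le_ceil _
  have hm₂ : (m : ℝ) ≤ 65 * k * r * log r := by
    have : (m : ℝ) < 64 * k * r * log r + 1 := Nat.ceil_lt_add_one (by linarith)
    nlinarith
  have hT₁ : m / (2 * r) ≤ T := Nat.le_ceil _
  have hT₂ : ((T : ℝ) - 1) * (2 * r) ≤ m := by
    have : (T : ℝ) < m / (2 * r) + 1 := Nat.ceil_lt_add_one (by positivity)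
    rw [← le_div_iff₀ (by positivity)]; linarith
  have hTm : T ≤ m := Nat.ceil_le.2 (div_le_self (Nat.cast_nonneg _) (by linarith))
  set 𝒟' := {D ∈ 𝒟 | (Fintype.card α : ℝ) < #D * r}
  set Φ := ∑ j ∈ Iic k, (2 * m).choose j
  have htrace (W : Finset α) (hW : #W ≤ 2 * Fintype.card (Fin m)) : #(𝒟'.image (W ∩ ·)) ≤ Φ :=
    calc #(𝒟'.image (W ∩ ·)) ≤ #(𝒟.image (W ∩ ·)) :=
          card_le_card (image_subset_image (filter_subset _ _))
      _ ≤ ∑ j ∈ Iic 𝒟.vcDim, (#W).choose j := card_image_inter_le_sum_choose 𝒟 W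
      _ ≤ Φ := (sum_le_sum_of_subset (Iic_subset_Iic.2 h𝒟)).trans
            (sum_le_sum fun j _ => Nat.choose_le_choose j (by simpa using hW))
  have hheavy (D : Finset α) (hD : D ∈ 𝒟') :
      Fintype.card α ^ Fintype.card (Fin m) ≤ 2 * #{t : Fin m → α | T ≤ #{i | t i ∈ D}} :=
    pow_card_le_two_mul_card_filter_le_card_filter_mem D (mem_filter.1 hD).2 (by simp; nlinarith)
      (by simpa using hT₂)
  have hΦ : 2 * Φ < 2 ^ T := by
    refine two_mul_sum_choose_lt_two_pow hk hr ?_ hm₂ ?_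
    · have : (k : ℝ) ≤ 2 * m := by nlinarith
      exact_mod_cast this
    · refine le_trans ?_ hT₁
      rw [le_div_iff₀ (by positivity)]; nlinarith
  obtain ⟨s, hs⟩ := exists_forall_exists_apply_mem 𝒟' (by simpa using hTm) htrace hheavy hΦ
  refine ⟨univ.image s, ?_, fun D hD hDr => ?_⟩
  · exact (Nat.cast_le.2 (card_image_le.trans (by simp))).trans hm₂
  · obtain ⟨i, hi⟩ := hs D (mem_filter.2 ⟨hD, hDr⟩)
    exact ⟨s i, mem_inter.2 ⟨hi, mem_image_of_mem _ (mem_univ i)⟩⟩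

theorem Finset.exists_forall_card_symmDiff_mul_le {α : Type*} [Fintype α] [DecidableEq α]
    [Nonempty α] {𝒜 : Finset (Finset α)} {d : ℕ} (hd : 1 ≤ d) (h𝒜 : 𝒜.vcDim ≤ d) {r : ℝ}
    (hr : 2 ≤ r) :
    ∃ N : Finset α, (#N : ℝ) ≤ 16640 * d * r * log r ∧
      ∀ A ∈ 𝒜, ∀ B ∈ 𝒜, A ∩ N = B ∩ N → #(A ∆ B) * r ≤ Fintype.card α := by
  obtain ⟨N, hN, hnet⟩ := exists_epsNet (image₂ (· \ ·) 𝒜 𝒜) (by omega)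
    (vcDim_image₂_le (fun W A B => inf_sdiff_distrib_left W A B) hd h𝒜) (r := 2 * r)
    (by linarith)
  have hlight {A B : Finset α} (hA : A ∈ 𝒜) (hB : B ∈ 𝒜) (hAB : A ∩ N = B ∩ N) :
      #(A \ B) * (2 * r) ≤ Fintype.card α := by
    by_contra! h
    obtain ⟨y, hy⟩ := hnet _ (mem_image₂_of_mem hA hB) h
    simp only [mem_inter, mem_sdiff] at hy
    exact hy.1.2 (mem_inter.1 (hAB ▸ mem_inter.2 ⟨hy.1.1, hy.2⟩)).1
  refine ⟨N, hN.trans ?_, fun A hA B hB hAB => ?_⟩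
  · have : log (2 * r) ≤ 2 * log r := by
      rw [log_mul (by norm_num) (by linarith)]; linarith [log_le_log (by norm_num) hr]
    push_cast
    have : 0 ≤ (d : ℝ) * r := by positivity
    nlinarith
  · calc #(A ∆ B) * r ≤ (#(A \ B) + #(B \ A)) * r := by
          gcongr; exact_mod_cast card_union_le _ _
      _ ≤ Fintype.card α := by linarith [hlight hA hB hAB, hlight hB hA hAB.symm]

/-- If `{E_x}` (and its dual) have VC dimension at most `d ≥ 2`, then the difference
family `{E_x \ E_{x'}}` has VC dimension at most `C·d`, and for every `r ≥ 2` there is a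
set `Ŷ ⊆ Y` of size at most `C·d·r·log r` such that any `x, x'` with the same trace on
`Ŷ` have `μ(E_x △ E_{x'}) ≤ 1/r`. -/
theorem diff_net_exists : ∃ C : ℝ, 0 < C ∧
    ∀ (X Y : Type) [Fintype X] [Fintype Y] [DecidableEq X] [DecidableEq Y] [Nonempty Y]
      (E : X → Y → Bool) (d : ℕ), 2 ≤ d →
      (∀ I : Finset Y, (∀ J ⊆ I, ∃ x : X, I.filter (fun y => E x y) = J) → I.card ≤ d) →
      (∀ I : Finset X, (∀ J ⊆ I, ∃ y : Y, I.filter (fun x => E x y) = J) → I.card ≤ d) →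
      ((∀ I : Finset Y,
          (∀ J ⊆ I, ∃ x x' : X, I.filter (fun y => E x y ∧ ¬ E x' y) = J) →
          (I.card : ℝ) ≤ C * d) ∧
        ∀ r : ℝ, 2 ≤ r → ∃ Yh : Finset Y,
          (Yh.card : ℝ) ≤ C * d * r * Real.log r ∧
          ∀ x x' : X,
            (univ : Finset Y).filter (fun y => E x y) ∩ Yh =
              (univ : Finset Y).filter (fun y => E x' y) ∩ Yh →
            ((((univ : Finset Y).filter (fun y => E x y) \
                (univ : Finset Y).filter (fun y => E x' y)) ∪
              ((univ : Finset Y).filter (fun y => E x' y) \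
                (univ : Finset Y).filter (fun y => E x y))).card : ℝ) / Fintype.card Y
              ≤ 1 / r) := by
  refine ⟨16640, by norm_num, fun X Y _ _ _ _ _ E d hd hE _ => ?_⟩
  set 𝒜 : Finset (Finset Y) := univ.image fun x => ({y | E x y} : Finset Y)
  have h𝒜 : 𝒜.vcDim ≤ d := Finset.sup_le fun I hI => hE I fun J hJ => by
    obtain ⟨_, hu, rfl⟩ := mem_shatterer.1 hI hJ
    obtain ⟨x, -, rfl⟩ := mem_image.1 hu
    exact ⟨x, by ext; simp⟩
  have hrow (x : X) : ({y | E x y} : Finset Y) ∈ 𝒜 := mem_image_of_mem _ (mem_univ x)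
  refine ⟨fun I hI => ?_, fun r hr => ?_⟩
  · have hI𝒜 : (image₂ (· \ ·) 𝒜 𝒜).Shatters I := fun J hJ => by
      obtain ⟨x, x', rfl⟩ := hI J hJ
      exact ⟨_, mem_image₂_of_mem (hrow x) (hrow x'), by ext; simp⟩
    have := hI𝒜.card_le_vcDim.trans
      (vcDim_image₂_le (fun W A B => inf_sdiff_distrib_left W A B) (by omega) h𝒜)
    exact_mod_cast (by omega : #I ≤ 16640 * d)
  · obtain ⟨N, hN, hsep⟩ := exists_forall_card_symmDiff_mul_le (by omega) h𝒜 hr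
    refine ⟨N, hN, fun x x' hxx' => ?_⟩
    rw [div_le_div_iff₀ (by positivity) (by linarith), one_mul]
    exact hsep _ (hrow x) _ (hrow x') hxx'
end
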